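/- Let T be a rooted tree with n nodes and let K ≥ 1. For each node v, let n_v be the number of descendants of v (including v) and let v₁,…,v_{d_v} be the children of v in any fixed order. Define cost(v) = 0 if v is a leaf, and otherwise cost(v) = Σ_{i=1}^{d_v} cost(v_i) + Σ_{i=1}^{d_v-1} min{n_{v₁}+⋯+n_{v_i}, K}·min{n_{v_{i+1}}, K}. Then for every node v: if n_v ≤ K, cost(v) ≤ n_v², and if n_v > K, cost(v) ≤ 2K·n_v - K². -/

import Mathlib

/-- Rooted trees with an ordered list of children. -/
inductive RTree where
  | node : List RTree → RTree

mutual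
/-- Number of nodes in the subtree rooted at `v` (including `v`). -/
def RTree.size : RTree → ℕ
  | .node cs => 1 + RTree.sizeList cs
def RTree.sizeList : List RTree → ℕ
  | [] => 0
  | t :: ts => RTree.size t + RTree.sizeList ts
end

/-- Given the running prefix sum `acc` of children sizes, adds
`min(acc,K)·min(nᵢ₊₁,K)` terms for the remaining children sizes. -/
def chainGo (K : ℕ) : ℕ → List ℕ → ℕ
  | _, [] => 0
  | acc, m :: rest => min acc K * min m K + chainGo K (acc + m) rest

/-- `Σ_{i=1}^{d-1} min(n₁+⋯+nᵢ, K)·min(nᵢ₊₁, K)` for the list of children sizes. -/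
def chainCost (K : ℕ) : List ℕ → ℕ
  | [] => 0
  | n :: rest => chainGo K n rest

mutual
/-- The recursive cost function: 0 on leaves, and otherwise the sum of children costs
plus `Σ_{i=1}^{d_v-1} min(n_{v₁}+⋯+n_{vᵢ}, K)·min(n_{vᵢ₊₁}, K)`. -/
def RTree.cost (K : ℕ) : RTree → ℕ
  | .node cs => RTree.costList K cs + chainCost K (cs.map RTree.size)
def RTree.costList (K : ℕ) : List RTree → ℕ
  | [] => 0
  | t :: ts => RTree.cost K t + RTree.costList K ts
end


/-! The bound `costBound K n` is superadditive up to exactly one merge term: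
`costBound K a + costBound K b + min a K * min b K ≤ costBound K (a + b)`.
Merging the children of `v` one at a time, each term of the chain sum is absorbed by one
such step, and the node `v` itself only increases the bound, by monotonicity. -/

def costBound (K n : ℕ) : ℕ := if n ≤ K then n ^ 2 else 2 * K * n - K ^ 2

lemma costBound_of_le {K n : ℕ} (h : n ≤ K) : costBound K n = n ^ 2 := if_pos h

lemma cast_costBound_of_lt {K n : ℕ} (h : K < n) :
    (costBound K n : ℤ) = 2 * K * n - K ^ 2 := by
  have hsq : K ^ 2 ≤ 2 * K * n := by nlinarith
  rw [costBound, if_neg h.not_ge]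
  push_cast [hsq]
  ring

lemma costBound_add_le (K a b : ℕ) :
    costBound K a + costBound K b + min a K * min b K ≤ costBound K (a + b) := by
  rcases le_or_gt (a + b) K with hab | hab
  · have ha : a ≤ K := by omega
    have hb : b ≤ K := by omega
    rw [costBound_of_le ha, costBound_of_le hb, costBound_of_le hab, min_eq_left ha,
      min_eq_left hb]
    nlinarith
  rcases le_or_gt a K with ha | ha <;> rcases le_or_gt b K with hb | hb
  · rw [min_eq_left ha, min_eq_left hb]
    zify
    rw [costBound_of_le ha, costBound_of_le hb, cast_costBound_of_lt hab]
    push_cast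
    -- `(a + b - K) ^ 2 ≤ a * b` since `a + b - K ≤ a, b`
    nlinarith [mul_le_mul (by omega : a + b - K ≤ a) (by omega : a + b - K ≤ b)]
  · rw [min_eq_left ha, min_eq_right hb.le]
    zify
    rw [costBound_of_le ha, cast_costBound_of_lt hb, cast_costBound_of_lt hab]
    push_cast
    nlinarith
  · rw [min_eq_right ha.le, min_eq_left hb]
    zify
    rw [cast_costBound_of_lt ha, costBound_of_le hb, cast_costBound_of_lt hab]
    push_cast
    nlinarith
  · rw [min_eq_right ha.le, min_eq_right hb.le]
    zify
    rw [cast_costBound_of_lt ha, cast_costBound_of_lt hb, cast_costBound_of_lt hab]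
    push_cast
    linarith

lemma costBound_mono (K : ℕ) : Monotone (costBound K) := by
  intro a b hab
  obtain ⟨c, rfl⟩ := Nat.exists_eq_add_of_le hab
  exact le_trans (by omega) (costBound_add_le K a c)

lemma costBound_add_chainGo_add_sum_le (K acc : ℕ) (ms : List ℕ) :
    costBound K acc + chainGo K acc ms + (ms.map (costBound K)).sum ≤
      costBound K (acc + ms.sum) := by
  induction ms generalizing acc with
  | nil => simp [chainGo]
  | cons m ms ih =>
    have hmerge := costBound_add_le K acc m
    have hrest := ih (acc + m)
    simp only [chainGo, List.map_cons, List.sum_cons, ← add_assoc]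
    omega

lemma chainCost_add_sum_le (K : ℕ) (ns : List ℕ) :
    chainCost K ns + (ns.map (costBound K)).sum ≤ costBound K ns.sum := by
  cases ns with
  | nil => simp [chainCost]
  | cons n ns =>
    have hchain := costBound_add_chainGo_add_sum_le K n ns
    simp only [chainCost, List.map_cons, List.sum_cons]
    omega

lemma RTree.sizeList_eq_sum (ts : List RTree) : RTree.sizeList ts = (ts.map RTree.size).sum := by
  induction ts with
  | nil => rfl
  | cons t ts ih => simp [RTree.sizeList, ih]

lemma RTree.costList_eq_sum (K : ℕ) (ts : List RTree) :
    RTree.costList K ts = (ts.map (RTree.cost K)).sum := by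
  induction ts with
  | nil => rfl
  | cons t ts ih => simp [RTree.costList, ih]

theorem RTree.cost_le_costBound (K : ℕ) : ∀ t : RTree, t.cost K ≤ costBound K t.size
  | .node cs => by
    have ih : ∀ c ∈ cs, c.cost K ≤ costBound K c.size := fun c _ => c.cost_le_costBound K
    calc RTree.cost K (.node cs)
        = (cs.map (RTree.cost K)).sum + chainCost K (cs.map RTree.size) := by
          rw [RTree.cost, RTree.costList_eq_sum]
      _ ≤ ((cs.map RTree.size).map (costBound K)).sum + chainCost K (cs.map RTree.size) := by
          rw [List.map_map]
          exact Nat.add_le_add_right (List.sum_le_sum ih) _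
      _ ≤ costBound K (cs.map RTree.size).sum := by
          linarith [chainCost_add_sum_le K (cs.map RTree.size)]
      _ ≤ costBound K (RTree.node cs).size := by
          rw [RTree.size, RTree.sizeList_eq_sum]
          exact costBound_mono K (Nat.le_add_left _ _)

/-- For every node v: cost(v) ≤ n_v² if n_v ≤ K, and cost(v) ≤ 2K·n_v - K² if n_v > K. -/
theorem cost_bound (K : ℕ) (hK : 1 ≤ K) (t : RTree) :
    (t.size ≤ K → t.cost K ≤ t.size ^ 2) ∧
    (K < t.size → t.cost K ≤ 2 * K * t.size - K ^ 2) := by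
  have h := t.cost_le_costBound K
  exact ⟨fun hle => by rwa [costBound, if_pos hle] at h,
    fun hlt => by rwa [costBound, if_neg hlt.not_ge] at h⟩
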